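/- For finitely supported y : ℤ → ℤ, one has ε(y) = max{n ∈ ℕ : ẽ^n(y) ≠ 0} and φ(y) = max{n ∈ ℕ : f̃^n(y) ≠ 0}, where ẽ, f̃ are the variant monomial operators (ẽ adds 1 at positions n_e, n_e+1 when ε(y) > 0 and returns 0 otherwise; f̃ subtracts 1 at positions n_f, n_f+1 when φ(y) > 0 and returns 0 otherwise). -/
import Mathlib


open Finset

/-- Partial sum `∑_{k ≤ n} y k` of a finitely supported `y : ℤ → ℤ`. -/
def psum (y : ℤ →₀ ℤ) (n : ℤ) : ℤ := ∑ k ∈ y.support.filter (fun k => k ≤ n), y k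

/-- Tail sum `∑_{k > n} y k`. -/
def tgt (y : ℤ →₀ ℤ) (n : ℤ) : ℤ := ∑ k ∈ y.support.filter (fun k => n < k), y k

/-- Tail sum `∑_{k ≥ n} y k`. -/
def tge (y : ℤ →₀ ℤ) (n : ℤ) : ℤ := ∑ k ∈ y.support.filter (fun k => n ≤ k), y k

/-- Total weight `∑_n y n`. -/
def wt (y : ℤ →₀ ℤ) : ℤ := ∑ k ∈ y.support, y k

/-- `φ(y) = max {∑_{k ≤ n} y k : n ∈ ℤ}` (the set is finite and nonempty). -/
noncomputable def phi (y : ℤ →₀ ℤ) : ℤ := sSup (Set.range (psum y))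

/-- `ε(y) = max {−∑_{k > n} y k : n ∈ ℤ}` (the set is finite and nonempty). -/
noncomputable def eps (y : ℤ →₀ ℤ) : ℤ := sSup (Set.range (fun n => - tgt y n))

/-- `n_f = min {n : ∑_{k ≤ n} y k = φ(y)}`. -/
noncomputable def nfPos (y : ℤ →₀ ℤ) : ℤ := sInf {n | psum y n = phi y}

/-- `n_e = max {n : ∑_{k ≤ n} y k = φ(y)}` (variant monomial crystal convention). -/
noncomputable def nePos (y : ℤ →₀ ℤ) : ℤ := sSup {n | psum y n = phi y}

/-- Variant monomial operator `f̃`: subtract 1 at positions `n_f` and `n_f + 1`. -/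
noncomputable def ftil (y : ℤ →₀ ℤ) : ℤ →₀ ℤ :=
  y - Finsupp.single (nfPos y) 1 - Finsupp.single (nfPos y + 1) 1

/-- Variant monomial operator `ẽ`: add 1 at positions `n_e` and `n_e + 1`. -/
noncomputable def etil (y : ℤ →₀ ℤ) : ℤ →₀ ℤ :=
  y + Finsupp.single (nePos y) 1 + Finsupp.single (nePos y + 1) 1

/-- `f̃` as a partially defined operator (`none` represents `0`). -/
noncomputable def ftilO : Option (ℤ →₀ ℤ) → Option (ℤ →₀ ℤ)
  | none => none
  | some y => if 0 < phi y then some (ftil y) else none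

/-- `ẽ` as a partially defined operator (`none` represents `0`). -/
noncomputable def etilO : Option (ℤ →₀ ℤ) → Option (ℤ →₀ ℤ)
  | none => none
  | some y => if 0 < eps y then some (etil y) else none

/- ### Auxiliary lemmas -/

lemma psum_eq_sum (y : ℤ →₀ ℤ) {S : Finset ℤ} (h : y.support ⊆ S) (n : ℤ) :
    psum y n = ∑ k ∈ S, if k ≤ n then y k else 0 := by
  rw [psum, Finset.sum_filter]
  apply Finset.sum_subset h
  intro x _ hxs
  have : y x = 0 := Finsupp.notMem_support_iff.mp hxs
  simp [this]

lemma psum_add (a b : ℤ →₀ ℤ) (n : ℤ) : psum (a + b) n = psum a n + psum b n := by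
  classical
  rw [psum_eq_sum (a + b) (Finsupp.support_add (g₁ := a) (g₂ := b)),
    psum_eq_sum a Finset.subset_union_left, psum_eq_sum b Finset.subset_union_right,
    ← Finset.sum_add_distrib]
  refine Finset.sum_congr rfl fun k _ => ?_
  by_cases h : k ≤ n <;> simp [h, Finsupp.add_apply]

lemma psum_neg (a : ℤ →₀ ℤ) (n : ℤ) : psum (-a) n = - psum a n := by
  rw [psum, psum, Finsupp.support_neg, ← Finset.sum_neg_distrib]
  exact Finset.sum_congr rfl fun k _ => rfl

lemma psum_sub (a b : ℤ →₀ ℤ) (n : ℤ) : psum (a - b) n = psum a n - psum b n := by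
  rw [sub_eq_add_neg, psum_add, psum_neg, sub_eq_add_neg]

lemma psum_single (m c n : ℤ) : psum (Finsupp.single m c) n = if m ≤ n then c else 0 := by
  rw [psum_eq_sum _ (Finsupp.support_single_subset) n, Finset.sum_singleton,
    Finsupp.single_eq_same]

lemma psum_eq_zero {y : ℤ →₀ ℤ} {n : ℤ} (h : ∀ k ∈ y.support, n < k) : psum y n = 0 := by
  rw [psum]
  apply Finset.sum_eq_zero
  intro k hk
  rw [Finset.mem_filter] at hk
  exact ((not_le.mpr (h k hk.1)) hk.2).elim

lemma psum_eq_wt {y : ℤ →₀ ℤ} {n : ℤ} (h : ∀ k ∈ y.support, k ≤ n) : psum y n = wt y := by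
  rw [psum, wt]
  congr 1
  rw [Finset.filter_eq_self]
  exact h

lemma exists_lb (s : Finset ℤ) : ∃ N : ℤ, ∀ k ∈ s, N < k := by
  rcases s.eq_empty_or_nonempty with rfl | hs
  · exact ⟨0, by simp⟩
  · exact ⟨s.min' hs - 1, fun k hk => lt_of_lt_of_le (by omega) (s.min'_le k hk)⟩

lemma exists_ub (s : Finset ℤ) : ∃ N : ℤ, ∀ k ∈ s, k ≤ N := by
  rcases s.eq_empty_or_nonempty with rfl | hs
  · exact ⟨0, by simp⟩
  · exact ⟨s.max' hs, fun k hk => s.le_max' k hk⟩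

lemma bddAbove_psum (y : ℤ →₀ ℤ) : BddAbove (Set.range (psum y)) := by
  refine ⟨∑ k ∈ y.support, |y k|, ?_⟩
  rintro _ ⟨n, rfl⟩
  calc psum y n ≤ ∑ k ∈ y.support.filter (fun k => k ≤ n), |y k| :=
        Finset.sum_le_sum fun k _ => le_abs_self _
    _ ≤ ∑ k ∈ y.support, |y k| :=
        Finset.sum_le_sum_of_subset_of_nonneg (Finset.filter_subset _ _)
          (fun k _ _ => abs_nonneg _)

lemma psum_le_phi (y : ℤ →₀ ℤ) (n : ℤ) : psum y n ≤ phi y :=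
  le_csSup (bddAbove_psum y) ⟨n, rfl⟩

lemma phi_mem (y : ℤ →₀ ℤ) : ∃ n, psum y n = phi y := by
  have := Int.csSup_mem (Set.range_nonempty (psum y)) (bddAbove_psum y)
  exact this

lemma phi_nonneg (y : ℤ →₀ ℤ) : 0 ≤ phi y := by
  obtain ⟨N, hN⟩ := exists_lb y.support
  have h0 : psum y N = 0 := psum_eq_zero hN
  have := psum_le_phi y N
  omega

lemma wt_le_phi (y : ℤ →₀ ℤ) : wt y ≤ phi y := by
  obtain ⟨N, hN⟩ := exists_ub y.support
  have h0 : psum y N = wt y := psum_eq_wt hN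
  have := psum_le_phi y N
  omega

lemma tgt_eq (y : ℤ →₀ ℤ) (n : ℤ) : psum y n + tgt y n = wt y := by
  rw [psum, tgt, wt]
  have h : y.support.filter (fun k => n < k) = y.support.filter (fun k => ¬ k ≤ n) := by
    apply Finset.filter_congr
    intro k _
    simp [not_le]
  rw [h]
  exact Finset.sum_filter_add_sum_filter_not _ _ _

lemma eps_eq (y : ℤ →₀ ℤ) : eps y = phi y - wt y := by
  rw [eps]
  apply IsGreatest.csSup_eq
  constructor
  · obtain ⟨n, hn⟩ := phi_mem y
    exact ⟨n, by have := tgt_eq y n; simp only; omega⟩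
  · rintro _ ⟨n, rfl⟩
    have h1 := tgt_eq y n
    have h2 := psum_le_phi y n
    simp only
    omega

lemma eps_nonneg (y : ℤ →₀ ℤ) : 0 ≤ eps y := by
  rw [eps_eq]
  have := wt_le_phi y
  omega

lemma wt_etil (y : ℤ →₀ ℤ) : wt (etil y) = wt y + 2 := by
  obtain ⟨N, hN⟩ := exists_ub ((etil y).support ∪ y.support)
  set E := nePos y
  have hM : ∀ k ∈ (etil y).support, k ≤ max N (E + 1) :=
    fun k hk => le_trans (hN k (Finset.mem_union_left _ hk)) (le_max_left _ _)
  have hMy : ∀ k ∈ y.support, k ≤ max N (E + 1) :=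
    fun k hk => le_trans (hN k (Finset.mem_union_right _ hk)) (le_max_left _ _)
  have h1 : psum (etil y) (max N (E + 1)) = wt (etil y) := psum_eq_wt hM
  have h2 : psum y (max N (E + 1)) = wt y := psum_eq_wt hMy
  have h3 : psum (etil y) (max N (E + 1)) =
      psum y (max N (E + 1)) + 1 + 1 := by
    rw [etil, psum_add, psum_add, psum_single, psum_single,
      if_pos (le_trans (by omega : E ≤ E + 1) (le_max_right _ _)),
      if_pos (le_max_right _ _)]
  omega

lemma wt_ftil (y : ℤ →₀ ℤ) : wt (ftil y) = wt y - 2 := by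
  obtain ⟨N, hN⟩ := exists_ub ((ftil y).support ∪ y.support)
  set F := nfPos y
  have hM : ∀ k ∈ (ftil y).support, k ≤ max N (F + 1) :=
    fun k hk => le_trans (hN k (Finset.mem_union_left _ hk)) (le_max_left _ _)
  have hMy : ∀ k ∈ y.support, k ≤ max N (F + 1) :=
    fun k hk => le_trans (hN k (Finset.mem_union_right _ hk)) (le_max_left _ _)
  have h1 : psum (ftil y) (max N (F + 1)) = wt (ftil y) := psum_eq_wt hM
  have h2 : psum y (max N (F + 1)) = wt y := psum_eq_wt hMy
  have h3 : psum (ftil y) (max N (F + 1)) =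
      psum y (max N (F + 1)) - 1 - 1 := by
    rw [ftil, psum_sub, psum_sub, psum_single, psum_single,
      if_pos (le_trans (by omega : F ≤ F + 1) (le_max_right _ _)),
      if_pos (le_max_right _ _)]
  omega

lemma phi_ftil {y : ℤ →₀ ℤ} (h : 0 < phi y) : phi (ftil y) = phi y - 1 := by
  have hne : Set.Nonempty {n | psum y n = phi y} := phi_mem y
  have hbdd : BddBelow {n | psum y n = phi y} := by
    obtain ⟨N, hN⟩ := exists_lb y.support
    refine ⟨N + 1, fun n hn => ?_⟩
    by_contra hc
    push_neg at hc
    have h0 : psum y n = 0 := psum_eq_zero (fun k hk => lt_of_le_of_lt (by omega) (hN k hk))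
    have : psum y n = phi y := hn
    omega
  set F := nfPos y with hF
  have hFmem : psum y F = phi y := Int.csInf_mem hne hbdd
  have hFmin : ∀ n, psum y n = phi y → F ≤ n := fun n hn => csInf_le hbdd hn
  have hps : ∀ n, psum (ftil y) n =
      psum y n - (if F ≤ n then 1 else 0) - (if F + 1 ≤ n then 1 else 0) := by
    intro n
    rw [ftil, psum_sub, psum_sub, psum_single, psum_single, ← hF]
  rw [phi]
  apply IsGreatest.csSup_eq
  constructor
  · refine ⟨F, ?_⟩
    rw [hps F, if_pos le_rfl, if_neg (by omega), hFmem]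
    ring
  · rintro _ ⟨n, rfl⟩
    rw [hps n]
    have hle := psum_le_phi y n
    by_cases hn : F ≤ n
    · rw [if_pos hn]
      split_ifs <;> omega
    · have hne2 : psum y n ≠ phi y := fun hc => hn (hFmin n hc)
      rw [if_neg hn, if_neg (by omega)]
      omega

lemma phi_etil {y : ℤ →₀ ℤ} (h : wt y < phi y) : phi (etil y) = phi y + 1 := by
  have hne : Set.Nonempty {n | psum y n = phi y} := phi_mem y
  have hbdd : BddAbove {n | psum y n = phi y} := by
    obtain ⟨N, hN⟩ := exists_ub y.support
    refine ⟨N, fun n hn => ?_⟩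
    by_contra hc
    push_neg at hc
    have h0 : psum y n = wt y := psum_eq_wt (fun k hk => le_trans (hN k hk) (by omega))
    have : psum y n = phi y := hn
    omega
  set E := nePos y with hE
  have hEmem : psum y E = phi y := Int.csSup_mem hne hbdd
  have hEmax : ∀ n, psum y n = phi y → n ≤ E := fun n hn => le_csSup hbdd hn
  have hps : ∀ n, psum (etil y) n =
      psum y n + (if E ≤ n then 1 else 0) + (if E + 1 ≤ n then 1 else 0) := by
    intro n
    rw [etil, psum_add, psum_add, psum_single, psum_single, ← hE]
  rw [phi]
  apply IsGreatest.csSup_eq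
  constructor
  · refine ⟨E, ?_⟩
    rw [hps E, if_pos le_rfl, if_neg (by omega), hEmem]
    ring
  · rintro _ ⟨n, rfl⟩
    rw [hps n]
    have hle := psum_le_phi y n
    by_cases hn : E + 1 ≤ n
    · have hne2 : psum y n ≠ phi y := fun hc => by have := hEmax n hc; omega
      rw [if_pos (by omega), if_pos hn]
      omega
    · rw [if_neg hn]
      split_ifs <;> omega

lemma eps_etil {y : ℤ →₀ ℤ} (h : 0 < eps y) : eps (etil y) = eps y - 1 := by
  have hwt : wt y < phi y := by rw [eps_eq] at h; omega
  rw [eps_eq, eps_eq, phi_etil hwt, wt_etil]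
  ring

lemma phi_ftil' {y : ℤ →₀ ℤ} (h : 0 < phi y) : phi (ftil y) = phi y - 1 := phi_ftil h

/-- Generic counting lemma for partial operators that decrease a nonnegative measure by 1. -/
lemma key_count (F : Option (ℤ →₀ ℤ) → Option (ℤ →₀ ℤ)) (μ : (ℤ →₀ ℤ) → ℤ)
    (hnone : F none = none)
    (h0 : ∀ z, μ z ≤ 0 → F (some z) = none)
    (h1 : ∀ z, 0 < μ z → ∃ z', F (some z) = some z' ∧ μ z' = μ z - 1)
    (hpos : ∀ z, 0 ≤ μ z) (y : ℤ →₀ ℤ) :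
    ∃ m : ℕ, IsGreatest {n : ℕ | F^[n] (some y) ≠ none} m ∧ (m : ℤ) = μ y := by
  suffices H : ∀ (m : ℕ) (z : ℤ →₀ ℤ), μ z = m →
      IsGreatest {n : ℕ | F^[n] (some z) ≠ none} m by
    exact ⟨(μ y).toNat, H _ y (Int.toNat_of_nonneg (hpos y)).symm,
      Int.toNat_of_nonneg (hpos y)⟩
  intro m
  induction m with
  | zero =>
    intro z hz
    constructor
    · show F^[0] (some z) ≠ none
      simp
    · intro n hn
      by_contra hc
      push_neg at hc
      obtain ⟨k, rfl⟩ : ∃ k, n = k + 1 := ⟨n - 1, by omega⟩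
      apply hn
      rw [Function.iterate_succ_apply, h0 z (le_of_eq hz), Function.iterate_fixed hnone]
  | succ m ih =>
    intro z hz
    have hpos' : 0 < μ z := by rw [hz]; exact_mod_cast Nat.succ_pos m
    obtain ⟨z', hFz, hμz⟩ := h1 z hpos'
    have hz' : μ z' = (m : ℤ) := by rw [hμz, hz]; push_cast; ring
    have IH := ih z' hz'
    constructor
    · show F^[m + 1] (some z) ≠ none
      rw [Function.iterate_succ_apply, hFz]
      exact IH.1
    · intro n hn
      cases n with
      | zero => omega
      | succ k =>
        have hk : F^[k] (some z') ≠ none := by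
          rw [← hFz, ← Function.iterate_succ_apply]
          exact hn
        have := IH.2 hk
        omega

/-- Semi-normality of the variant monomial crystal (single index):
`ε(y) = max {n ∈ ℕ : ẽⁿ y ≠ 0}` and `φ(y) = max {n ∈ ℕ : f̃ⁿ y ≠ 0}`. -/
theorem stmt9 (y : ℤ →₀ ℤ) :
    (∃ m : ℕ, IsGreatest {n : ℕ | etilO^[n] (some y) ≠ none} m ∧ (m : ℤ) = eps y) ∧
    (∃ m : ℕ, IsGreatest {n : ℕ | ftilO^[n] (some y) ≠ none} m ∧ (m : ℤ) = phi y) := by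
  constructor
  · apply key_count etilO eps rfl
    · intro z hz
      simp [etilO, not_lt.mpr hz]
    · intro z hz
      exact ⟨etil z, by simp [etilO, hz], eps_etil hz⟩
    · exact eps_nonneg
  · apply key_count ftilO phi rfl
    · intro z hz
      simp [ftilO, not_lt.mpr hz]
    · intro z hz
      exact ⟨ftil z, by simp [ftilO, hz], phi_ftil hz⟩
    · exact phi_nonneg
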